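/- arXiv:1401.2666 — 4 statements merged into one kernel-verified Lean document; each statement's English description precedes it below -/
import Mathlib

section
/- Let N ≥ 3 and let u : closure(B₁⁺) → ℝ be a positive C¹ function on the closed upper half-ball of radius 1 in ℝ^N. Define g(r,θ) = r^((N-2)/2) u(rθ) for r ∈ (0,1] and θ in the closed upper half unit sphere. Then there exists r₀ ∈ (0,1] such that ∂g/∂r (r,θ) > 0 for all 0 < r ≤ r₀ and all θ; in particular, for every λ ∈ (0, r₀] and every y in the closed half-ball of radius r₀ with |y| > λ, one has u(y) > (λ/|y|)^(N-2) u(λ² y / |y|²). -/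
open Real Filter
open scoped BigOperators RealInnerProductSpace

noncomputable section

/-- `N`-dimensional Euclidean space. -/
abbrev E (N : ℕ) := EuclideanSpace ℝ (Fin N)

/-- The last coordinate index of `Fin N`. -/
def lastIdx (N : ℕ) (h : 0 < N) : Fin N := ⟨N - 1, Nat.sub_lt h Nat.one_pos⟩

/-- Partial derivative of `u` in the `i`-th coordinate direction. -/
def pd {N : ℕ} (u : E N → ℝ) (i : Fin N) (y : E N) : ℝ :=
  fderiv ℝ u y (EuclideanSpace.single i 1)

/-- The Laplacian of `u`. -/
def lap {N : ℕ} (u : E N → ℝ) (y : E N) : ℝ := ∑ i, pd (pd u i) i y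

/-!
Write `α = (N-2)/2` and `g(r) = r^α u(rθ)`. Then `g'(r) = r^(α-1) (α u(rθ) + r Du(rθ)·θ)`, and
since `u ≥ m > 0` and `|Du| ≤ M` on the compact half-ball, the bracket is positive as soon as
`r M < α m`. So `g` is strictly increasing on `(0, r₀]`. Comparing `g` at `λ²/|y| < |y|` along the
ray through `y` and multiplying by `|y|^α` gives the Kelvin-transform inequality, because
`(|y| · λ²/|y|)^α = λ^(N-2)` and `|y|^(2α) = |y|^(N-2)`.
-/

open Set Topology

theorem HasFDerivWithinAt.hasDerivAt_comp_smul {F : Type*} [NormedAddCommGroup F]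
    [NormedSpace ℝ F] {u : F → ℝ} {L : F →L[ℝ] ℝ} {S : Set F} {θ : F} {r : ℝ}
    (hu : HasFDerivWithinAt u L S (r • θ)) (hS : ∀ᶠ s in 𝓝 r, s • θ ∈ S) :
    HasDerivAt (fun s : ℝ => u (s • θ)) (L θ) r := by
  have hray : HasDerivWithinAt (fun s : ℝ => s • θ) θ {s | s • θ ∈ S} r := by
    simpa using ((hasDerivAt_id r).smul_const θ).hasDerivWithinAt
  exact (hu.comp_hasDerivWithinAt r hray fun _ hs => hs).hasDerivAt hS

theorem exists_pos_hasDerivAt_rpow_mul_comp_smul {F : Type*} [NormedAddCommGroup F]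
    [NormedSpace ℝ F] {u : F → ℝ} {L : F →L[ℝ] ℝ} {S : Set F} {θ : F} {r α m M : ℝ}
    (hu : HasFDerivWithinAt u L S (r • θ)) (hS : ∀ᶠ s in 𝓝 r, s • θ ∈ S) (hα : 0 < α)
    (hr : 0 < r) (hm : m ≤ u (r • θ)) (hL : ‖L‖ ≤ M) (hθ : ‖θ‖ ≤ 1) (hrM : r * M < α * m) :
    ∃ d > 0, HasDerivAt (fun s : ℝ => s ^ α * u (s • θ)) d r := by
  have hder := (hasDerivAt_rpow_const (p := α) (Or.inl hr.ne')).mul (hu.hasDerivAt_comp_smul hS)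
  refine ⟨_, ?_, hder⟩
  have hLθ : |L θ| ≤ M := by
    calc |L θ| = ‖L θ‖ := rfl
      _ ≤ ‖L‖ * ‖θ‖ := L.le_opNorm θ
      _ ≤ M := by nlinarith [norm_nonneg L, norm_nonneg θ]
  have hbracket : 0 < α * u (r • θ) + r * L θ := by
    nlinarith [neg_abs_le (L θ), mul_le_mul_of_nonneg_left hm hα.le]
  have hsplit : r ^ α = r ^ (α - 1) * r := by
    rw [← rpow_add_one hr.ne', sub_add_cancel]
  calc (0 : ℝ) < r ^ (α - 1) * (α * u (r • θ) + r * L θ) :=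
        mul_pos (rpow_pos_of_pos hr _) hbracket
    _ = α * r ^ (α - 1) * u (r • θ) + r ^ α * L θ := by rw [hsplit]; ring

theorem Convex.strictMonoOn_of_exists_hasDerivAt_pos {D : Set ℝ} (hD : Convex ℝ D) {f : ℝ → ℝ}
    (hf : ∀ x ∈ D, ∃ d > 0, HasDerivAt f d x) : StrictMonoOn f D := by
  refine strictMonoOn_of_deriv_pos hD (fun x hx => ?_) (fun x hx => ?_)
  · obtain ⟨d, -, hd⟩ := hf x hx
    exact hd.continuousAt.continuousWithinAt
  · obtain ⟨d, hd_pos, hd⟩ := hf x (interior_subset hx)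
    rwa [hd.deriv]

theorem exists_forall_exists_pos_hasDerivAt_rpow_mul_comp_smul {F : Type*}
    [NormedAddCommGroup F] [NormedSpace ℝ F] {S : Set F} (hS : IsCompact S) (hSc : Convex ℝ S)
    (hS0 : (0 : F) ∈ S) (hSu : UniqueDiffOn ℝ S) (hS1 : ∀ y ∈ S, ‖y‖ ≤ 1) {u : F → ℝ}
    (hreg : ContDiffOn ℝ 1 u S) (hpos : ∀ y ∈ S, 0 < u y) {α : ℝ} (hα : 0 < α) :
    ∃ r₀ ∈ Ioc (0 : ℝ) 1, ∀ θ ∈ S, ∀ r ∈ Ioc 0 r₀,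
      ∃ d > 0, HasDerivAt (fun s : ℝ => s ^ α * u (s • θ)) d r := by
  obtain ⟨m, hm, hmu⟩ := hS.exists_forall_le' hreg.continuousOn hpos
  obtain ⟨M, hM, hMu⟩ := (hS.image_of_continuousOn
    (hreg.continuousOn_fderivWithin hSu le_rfl)).isBounded.exists_pos_norm_le
  set r₀ := min (1 / 2) (α * m / (2 * M))
  refine ⟨r₀, ⟨lt_min (by norm_num) (by positivity), (min_le_left _ _).trans (by norm_num)⟩,
    fun θ hθS r ⟨hr, hrr⟩ => ?_⟩
  have hr1 : r < 1 := (hrr.trans (min_le_left _ _)).trans_lt (by norm_num)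
  have hray : ∀ s ∈ Icc (0 : ℝ) 1, s • θ ∈ S := fun s hs => hSc.smul_mem_of_zero_mem hS0 hθS hs
  have hrθ := hray r ⟨hr.le, hr1.le⟩
  refine exists_pos_hasDerivAt_rpow_mul_comp_smul
    ((hreg.differentiableOn one_ne_zero _ hrθ).hasFDerivWithinAt)
    (mem_of_superset (Icc_mem_nhds hr hr1) hray) hα hr (hmu _ hrθ)
    (hMu _ (mem_image_of_mem _ hrθ)) (hS1 θ hθS) ?_
  have : r * (2 * M) ≤ α * m := (le_div_iff₀ (by positivity)).1 (hrr.trans (min_le_right _ _))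
  nlinarith

theorem rpow_half_sub_two_mul_self {N : ℕ} (hN : 2 ≤ N) {x : ℝ} (hx : 0 < x) :
    x ^ (((N : ℝ) - 2) / 2) * x ^ (((N : ℝ) - 2) / 2) = x ^ (N - 2) := by
  rw [← rpow_add hx, ← rpow_natCast, Nat.cast_sub hN]
  norm_num

theorem kelvin_lt_of_strictMonoOn {F : Type*} [NormedAddCommGroup F] [NormedSpace ℝ F]
    {N : ℕ} (hN : 2 ≤ N) {u : F → ℝ} {ρ lam : ℝ} {y : F}
    (hmono : StrictMonoOn (fun t : ℝ => t ^ (((N : ℝ) - 2) / 2) * u (t • (‖y‖⁻¹ • y)))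
      (Ioc 0 ρ))
    (hlam : 0 < lam) (hlamy : lam < ‖y‖) (hyρ : ‖y‖ ≤ ρ) :
    (lam / ‖y‖) ^ (N - 2) * u ((lam ^ 2 / ‖y‖ ^ 2) • y) < u y := by
  set α : ℝ := ((N : ℝ) - 2) / 2
  set s := ‖y‖
  have hs : 0 < s := hlam.trans hlamy
  set a := lam ^ 2 / s with ha_def
  have ha : 0 < a := by positivity
  have has : a < s := by rw [div_lt_iff₀ hs]; nlinarith
  have hg := hmono ⟨ha, has.le.trans hyρ⟩ ⟨hs, hyρ⟩ has
  simp only [smul_smul] at hg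
  rw [mul_inv_cancel₀ hs.ne', one_smul,
    show a * s⁻¹ = lam ^ 2 / s ^ 2 by rw [ha_def]; field_simp] at hg
  have hsa : s ^ α * a ^ α = lam ^ (N - 2) := by
    rw [← mul_rpow hs.le ha.le, show s * a = lam * lam by rw [ha_def]; field_simp,
      mul_rpow hlam.le hlam.le, rpow_half_sub_two_mul_self hN hlam]
  have hlt := mul_lt_mul_of_pos_left hg (rpow_pos_of_pos hs α)
  rw [← mul_assoc, ← mul_assoc, hsa, rpow_half_sub_two_mul_self hN hs] at hlt
  rw [div_pow, div_mul_eq_mul_div, div_lt_iff₀ (pow_pos hs _)]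
  linarith

def closedHalfBall {N : ℕ} (i : Fin N) : Set (E N) := {y | ‖y‖ ≤ 1 ∧ 0 ≤ y i}

section closedHalfBall

variable {N : ℕ} (i : Fin N)

theorem zero_mem_closedHalfBall : (0 : E N) ∈ closedHalfBall i := ⟨by simp, by simp⟩

theorem isCompact_closedHalfBall : IsCompact (closedHalfBall i) :=
  (isCompact_closedBall (0 : E N) 1).of_isClosed_subset
    ((isClosed_le continuous_norm continuous_const).inter
      (isClosed_le continuous_const (PiLp.continuous_apply _ _ i)))
    fun _ hy => mem_closedBall_zero_iff.2 hy.1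

theorem convex_closedHalfBall : Convex ℝ (closedHalfBall i) := by
  have hball : Convex ℝ {y : E N | ‖y‖ ≤ 1} := by
    simpa only [Metric.closedBall, dist_zero_right] using convex_closedBall (0 : E N) 1
  exact hball.inter
    (convex_halfSpace_ge (f := fun y : E N => y i) ⟨fun _ _ => rfl, fun _ _ => rfl⟩ 0)

theorem uniqueDiffOn_closedHalfBall : UniqueDiffOn ℝ (closedHalfBall i) := by
  refine uniqueDiffOn_convex (convex_closedHalfBall i) ?_
  refine ⟨EuclideanSpace.single i (1 / 2), ?_⟩
  have hopen : IsOpen {y : E N | ‖y‖ < 1 ∧ 0 < y i} :=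
    (isOpen_lt continuous_norm continuous_const).inter
      (isOpen_lt continuous_const (PiLp.continuous_apply _ _ i))
  have hsub : {y : E N | ‖y‖ < 1 ∧ 0 < y i} ⊆ closedHalfBall i := fun _ hy => ⟨hy.1.le, hy.2.le⟩
  refine interior_maximal hsub hopen ⟨?_, ?_⟩
  · rw [PiLp.norm_single]; norm_num
  · rw [PiLp.single_apply]; norm_num

end closedHalfBall

/-- the moving sphere process can start: for a positive `C¹` function `u` on
the closed upper half unit ball, `g(r,θ) = r^((N-2)/2) u(rθ)` is strictly increasing in `r`
for `r ≤ r₀`, and consequently `u(y) > (λ/|y|)^(N-2) u(λ² y/|y|²)` for `λ < |y| ≤ r₀`. -/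
theorem stmt0 (N : ℕ) (hN : 3 ≤ N) (u : E N → ℝ)
    (hreg : ContDiffOn ℝ 1 u {y : E N | ‖y‖ ≤ 1 ∧ 0 ≤ y (lastIdx N (by omega))})
    (hpos : ∀ y : E N, ‖y‖ ≤ 1 → 0 ≤ y (lastIdx N (by omega)) → 0 < u y) :
    ∃ r₀ : ℝ, 0 < r₀ ∧ r₀ ≤ 1 ∧
      (∀ r : ℝ, 0 < r → r ≤ r₀ → ∀ θ : E N, ‖θ‖ = 1 → 0 ≤ θ (lastIdx N (by omega)) →
        0 < deriv (fun s : ℝ => s ^ (((N : ℝ) - 2) / 2) * u (s • θ)) r) ∧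
      (∀ lam : ℝ, 0 < lam → lam ≤ r₀ → ∀ y : E N, ‖y‖ ≤ r₀ → 0 ≤ y (lastIdx N (by omega)) →
        lam < ‖y‖ →
        (lam / ‖y‖) ^ (N - 2) * u ((lam ^ 2 / ‖y‖ ^ 2) • y) < u y) := by
  set S := closedHalfBall (lastIdx N (by omega))
  set α : ℝ := ((N : ℝ) - 2) / 2
  have hα : 0 < α := by
    have : (3 : ℝ) ≤ N := by exact_mod_cast hN
    simp only [α]
    linarith
  obtain ⟨r₀, ⟨hr₀, hr₀1⟩, key⟩ := exists_forall_exists_pos_hasDerivAt_rpow_mul_comp_smul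
    (isCompact_closedHalfBall _) (convex_closedHalfBall _) (zero_mem_closedHalfBall _)
    (uniqueDiffOn_closedHalfBall _) (fun _ hy => hy.1) hreg (fun y hy => hpos y hy.1 hy.2) hα
  have hmono : ∀ θ ∈ S, StrictMonoOn (fun s : ℝ => s ^ α * u (s • θ)) (Ioc 0 r₀) :=
    fun θ hθS => (convex_Ioc 0 r₀).strictMonoOn_of_exists_hasDerivAt_pos (key θ hθS)
  refine ⟨r₀, hr₀, hr₀1, ?_, ?_⟩
  · intro r hr hrr θ hθ hθi
    obtain ⟨d, hd, hder⟩ := key θ ⟨hθ.le, hθi⟩ r ⟨hr, hrr⟩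
    rwa [hder.deriv]
  · intro lam hlam _ y hyr hyi hlamy
    have hy : 0 < ‖y‖ := hlam.trans hlamy
    have hθ : ‖‖y‖⁻¹ • y‖ = 1 := norm_smul_inv_norm (norm_pos_iff.1 hy)
    have hθi : 0 ≤ (‖y‖⁻¹ • y) (lastIdx N (by omega)) := mul_nonneg (inv_nonneg.2 hy.le) hyi
    exact kelvin_lt_of_strictMonoOn (by omega) (hmono _ ⟨hθ.le, hθi⟩) hlam hlamy hyr
end
end

section
/- Let m ≥ 1 and let A = [a_{ij}] be an m × m real matrix with nonnegative entries which is irreducible (i.e., there is no partition of {1,…,m} into nonempty sets I₁, I₂ with a_{ij} = 0 for all i ∈ I₁ and j ∈ I₂). Suppose w₁, …, w_m are nonnegative continuous functions on a connected open set Σ ⊆ ℝ^N such that each w_i is superharmonic wherever some w_j with a_{ij} > 0 is positive, in the precise sense: −Δw_i = Σ_j φ_{ij}(u_j^{a_{ij}} − v_j^{a_{ij}}) with φ_{ij} > 0, w_j = u_j − v_j ≥ 0, u_j, v_j > 0. If some w_{i₀} ≡ 0 on Σ, then w_i ≡ 0 on Σ for all i. -/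
/-! The indices `i` with `w_i ≡ 0` form a set closed under `a i j ≠ 0`: there `Δw_i = 0`, so
the right-hand side, a sum of nonnegative terms, vanishes termwise, and `t ↦ t ^ a` is strictly
increasing for `a > 0`. An irreducible matrix admits no nonempty proper closed set. -/

open Real Filter
open scoped BigOperators RealInnerProductSpace

noncomputable section

theorem Filter.EventuallyEq.pd_eventuallyEq {N : ℕ} {f g : E N → ℝ} {y : E N}
    (h : f =ᶠ[nhds y] g) (i : Fin N) : pd f i =ᶠ[nhds y] pd g i :=
  h.eventuallyEq_nhds.mono fun _ hz => by simp only [pd, hz.fderiv_eq]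

theorem Filter.EventuallyEq.lap_eq {N : ℕ} {f g : E N → ℝ} {y : E N}
    (h : f =ᶠ[nhds y] g) : lap f y = lap g y :=
  Finset.sum_congr rfl fun i _ => by
    simp only [pd, ((h.pd_eventuallyEq i).fderiv_eq)]

theorem pd_const {N : ℕ} (c : ℝ) (i : Fin N) : pd (fun _ => c) i = fun _ => 0 := by
  funext y
  simp [pd]

theorem lap_const {N : ℕ} (c : ℝ) (y : E N) : lap (fun _ => c) y = 0 := by
  simp [lap, pd_const, pd]

theorem eq_univ_of_irreducible {ι R : Type*} [Zero R] {a : ι → ι → R}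
    (hirr : ¬ ∃ I₁ I₂ : Set ι, I₁.Nonempty ∧ I₂.Nonempty ∧
      I₁ ∪ I₂ = Set.univ ∧ Disjoint I₁ I₂ ∧ ∀ i ∈ I₁, ∀ j ∈ I₂, a i j = 0)
    {S : Set ι} (hS : S.Nonempty) (hclosed : ∀ i ∈ S, ∀ j, a i j ≠ 0 → j ∈ S) :
    S = Set.univ := by
  by_contra hne
  refine hirr ⟨S, Sᶜ, hS, Set.nonempty_compl.mpr hne, S.union_compl_self,
    disjoint_compl_right, fun i hi j hj => ?_⟩
  by_contra hij
  exact hj (hclosed i hi j hij)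

theorem eq_of_sum_mul_rpow_sub_rpow_eq_zero {ι : Type*} {s : Finset ι}
    {φ u v a : ι → ℝ} (hφ : ∀ k ∈ s, 0 < φ k) (hv : ∀ k ∈ s, 0 ≤ v k)
    (hle : ∀ k ∈ s, v k ≤ u k) (ha : ∀ k ∈ s, 0 ≤ a k)
    (hsum : ∑ k ∈ s, φ k * (u k ^ a k - v k ^ a k) = 0)
    {j : ι} (hj : j ∈ s) (haj : a j ≠ 0) : u j = v j := by
  have hterm_nonneg : ∀ k ∈ s, 0 ≤ φ k * (u k ^ a k - v k ^ a k) := fun k hk =>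
    mul_nonneg (hφ k hk).le
      (sub_nonneg.mpr (rpow_le_rpow (hv k hk) (hle k hk) (ha k hk)))
  have hterm := (Finset.sum_eq_zero_iff_of_nonneg hterm_nonneg).mp hsum j hj
  have hpow : u j ^ a j = v j ^ a j := by
    rcases mul_eq_zero.mp hterm with h | h
    · exact absurd h (hφ j hj).ne'
    · exact sub_eq_zero.mp h
  by_contra hne
  have hlt : v j ^ a j < u j ^ a j :=
    rpow_lt_rpow (hv j hj) (lt_of_le_of_ne (hle j hj) (Ne.symm hne))
      (lt_of_le_of_ne (ha j hj) (Ne.symm haj))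
  exact hlt.ne' hpow

theorem stmt4_general (N m : ℕ) (a : Fin m → Fin m → ℝ)
    (ha : ∀ i j, 0 ≤ a i j)
    (hirr : ¬ ∃ I₁ I₂ : Set (Fin m), I₁.Nonempty ∧ I₂.Nonempty ∧
      I₁ ∪ I₂ = Set.univ ∧ Disjoint I₁ I₂ ∧ ∀ i ∈ I₁, ∀ j ∈ I₂, a i j = 0)
    (Ω : Set (E N)) (hopen : IsOpen Ω)
    (u v : Fin m → E N → ℝ) (φ : Fin m → Fin m → E N → ℝ)
    (hvpos : ∀ i, ∀ y ∈ Ω, 0 < v i y)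
    (hle : ∀ i, ∀ y ∈ Ω, v i y ≤ u i y)
    (hφ : ∀ i j, ∀ y ∈ Ω, 0 < φ i j y)
    (hpde : ∀ i, ∀ y ∈ Ω, -(lap (fun z => u i z - v i z) y)
        = ∑ j, φ i j y * ((u j y) ^ (a i j) - (v j y) ^ (a i j)))
    (i₀ : Fin m) (h0 : ∀ y ∈ Ω, u i₀ y = v i₀ y) :
    ∀ i, ∀ y ∈ Ω, u i y = v i y := by
  set S : Set (Fin m) := {i | ∀ y ∈ Ω, u i y = v i y}
  suffices S = Set.univ from Set.eq_univ_iff_forall.mp this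
  refine eq_univ_of_irreducible hirr ⟨i₀, h0⟩ fun i hi j haij y hy => ?_
  have hlap : lap (fun z => u i z - v i z) y = 0 := by
    have hzero : (fun z => u i z - v i z) =ᶠ[nhds y] fun _ => 0 :=
      eventually_of_mem (hopen.mem_nhds hy) fun z hz => sub_eq_zero.mpr (hi z hz)
    rw [hzero.lap_eq, lap_const]
  have hsum : ∑ k, φ i k y * (u k y ^ a i k - v k y ^ a i k) = 0 := by
    rw [← hpde i y hy, hlap, neg_zero]
  exact eq_of_sum_mul_rpow_sub_rpow_eq_zero (fun k _ => hφ i k y hy)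
    (fun k _ => (hvpos k y hy).le) (fun k _ => hle k y hy) (fun k _ => ha i k) hsum
    (Finset.mem_univ j) haij

/-- if `A` is irreducible with nonnegative entries and the nonnegative
differences `w_i = u_i - v_i` satisfy `-Δw_i = Σ_j φ_{ij}(u_j^{a_{ij}} - v_j^{a_{ij}})`
with `φ_{ij} > 0`, then vanishing of one `w_{i₀}` forces all `w_i` to vanish. -/
theorem stmt4 (N m : ℕ) (hm : 1 ≤ m) (a : Fin m → Fin m → ℝ)
    (ha : ∀ i j, 0 ≤ a i j)
    (hirr : ¬ ∃ I₁ I₂ : Set (Fin m), I₁.Nonempty ∧ I₂.Nonempty ∧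
      I₁ ∪ I₂ = Set.univ ∧ Disjoint I₁ I₂ ∧ ∀ i ∈ I₁, ∀ j ∈ I₂, a i j = 0)
    (Ω : Set (E N)) (hopen : IsOpen Ω) (hconn : IsConnected Ω)
    (u v : Fin m → E N → ℝ) (φ : Fin m → Fin m → E N → ℝ)
    (hu : ∀ i, ContDiffOn ℝ 2 (u i) Ω) (hv : ∀ i, ContDiffOn ℝ 2 (v i) Ω)
    (hvpos : ∀ i, ∀ y ∈ Ω, 0 < v i y)
    (hle : ∀ i, ∀ y ∈ Ω, v i y ≤ u i y)
    (hφ : ∀ i j, ∀ y ∈ Ω, 0 < φ i j y)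
    (hpde : ∀ i, ∀ y ∈ Ω, -(lap (fun z => u i z - v i z) y)
        = ∑ j, φ i j y * ((u j y) ^ (a i j) - (v j y) ^ (a i j)))
    (i₀ : Fin m) (h0 : ∀ y ∈ Ω, u i₀ y = v i₀ y) :
    ∀ i, ∀ y ∈ Ω, u i y = v i y :=
  stmt4_general N m a ha hirr Ω hopen u v φ hvpos hle hφ hpde i₀ h0
end
end

section
/- Let m ≥ 1, let a_{ij} ≥ 0 (1 ≤ i, j ≤ m), and let c₁, …, c_m be real numbers. There do not exist functions u₁, …, u_m ∈ C²([0,∞)) satisfying, for every i: (i) u_i''(t) = −∏_{j=1}^m u_j(t)^{a_{ij}} for t ∈ (0,∞); (ii) u_i'(0) = c_i ∏_{j=1}^m u_j(0)^{b_{ij}} for some reals b_{ij}; (iii) u_i(t) > 0 for all t ∈ [0,∞). More precisely, no positive C² functions u₁, …, u_m on [0,∞) can satisfy u_i'' = −∏_j u_j^{a_{ij}} on (0,∞) with each product ∏_j u_j^{a_{ij}} strictly positive. -/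
open Real Filter
open scoped BigOperators RealInnerProductSpace

noncomputable section

/-!
Each `u_i` is concave on `[0,∞)` and positive, so it is nondecreasing: a negative slope at
some point would persist and drive `u_i` below zero. Hence every product `∏_j u_j^{a_ij}`
is bounded below on `[1,∞)` by its positive value `δ` at `1`, so `u_i'` decreases at rate at
least `δ` and becomes negative, a contradiction.
-/

open Set

theorem not_bddBelow_image_Ici_of_deriv_le_neg {f : ℝ → ℝ} {t₀ c : ℝ} (hc : 0 < c)
    (hf : ContinuousOn f (Ici t₀)) (hf' : DifferentiableOn ℝ f (Ioi t₀))
    (hderiv : ∀ t ∈ Ioi t₀, deriv f t ≤ -c) : ¬ BddBelow (f '' Ici t₀) := by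
  rintro ⟨M, hM⟩
  set T := t₀ + (|f t₀ - M| + 1) / c
  have hT : t₀ ≤ T := le_add_of_nonneg_right (by positivity)
  have hdecay : f T - f t₀ ≤ -c * (T - t₀) :=
    (convex_Ici t₀).image_sub_le_mul_sub_of_deriv_le hf (by rwa [interior_Ici])
      (by rwa [interior_Ici]) t₀ self_mem_Ici T hT hT
  have hcT : c * (T - t₀) = |f t₀ - M| + 1 := by
    simp only [T, add_sub_cancel_left]
    field_simp
  have hMT : M ≤ f T := hM (mem_image_of_mem f hT)
  linarith [le_abs_self (f t₀ - M)]

section ConcaveBoundedBelow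

variable {f : ℝ → ℝ} {a : ℝ}

theorem ContDiffOn.differentiableOn_deriv_Ioi (hf : ContDiffOn ℝ 2 f (Ioi a)) :
    DifferentiableOn ℝ (deriv f) (Ioi a) :=
  (hf.deriv_of_isOpen isOpen_Ioi (m := 1) (by norm_num)).differentiableOn one_ne_zero

theorem antitoneOn_deriv_of_deriv_deriv_nonpos (hf : ContDiffOn ℝ 2 f (Ioi a))
    (hf'' : ∀ t ∈ Ioi a, deriv (deriv f) t ≤ 0) : AntitoneOn (deriv f) (Ioi a) := by
  have hdiff := hf.differentiableOn_deriv_Ioi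
  refine antitoneOn_of_deriv_nonpos (convex_Ioi a) hdiff.continuousOn ?_ ?_ <;>
    rwa [interior_Ioi]

theorem deriv_nonneg_of_antitoneOn_deriv_of_bddBelow (hf : ContinuousOn f (Ici a))
    (hf' : DifferentiableOn ℝ f (Ioi a)) (hanti : AntitoneOn (deriv f) (Ioi a))
    (hbdd : BddBelow (f '' Ici a)) {t : ℝ} (ht : a < t) : 0 ≤ deriv f t := by
  by_contra! hneg
  refine not_bddBelow_image_Ici_of_deriv_le_neg (neg_pos.2 hneg)
    (hf.mono (Ici_subset_Ici.2 ht.le)) (hf'.mono (Ioi_subset_Ioi ht.le)) (fun s hs => ?_)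
    (hbdd.mono (image_mono (Ici_subset_Ici.2 ht.le)))
  rw [neg_neg]
  exact hanti ht (ht.trans hs) (le_of_lt hs)

theorem monotoneOn_of_antitoneOn_deriv_of_bddBelow (hf : ContinuousOn f (Ici a))
    (hf' : DifferentiableOn ℝ f (Ioi a)) (hanti : AntitoneOn (deriv f) (Ioi a))
    (hbdd : BddBelow (f '' Ici a)) : MonotoneOn f (Ici a) :=
  monotoneOn_of_deriv_nonneg (convex_Ici a) hf (by rwa [interior_Ici]) fun _ ht =>
    deriv_nonneg_of_antitoneOn_deriv_of_bddBelow hf hf' hanti hbdd (by rwa [interior_Ici] at ht)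

end ConcaveBoundedBelow

/-- there are no positive `C²` functions `u₁, …, u_m` on `[0,∞)` with
`u_i'' = -∏_j u_j^{a_{ij}}` on `(0,∞)`, the products being strictly positive. -/
theorem stmt5 (m : ℕ) (hm : 1 ≤ m) (a : Fin m → Fin m → ℝ) (ha : ∀ i j, 0 ≤ a i j) :
    ¬ ∃ u : Fin m → ℝ → ℝ,
      (∀ i, ContDiffOn ℝ 2 (u i) (Set.Ici (0 : ℝ))) ∧
      (∀ i, ∀ t : ℝ, 0 ≤ t → 0 < u i t) ∧
      (∀ i, ∀ t : ℝ, 0 < t → deriv (deriv (u i)) t = -∏ j, (u j t) ^ (a i j)) ∧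
      (∀ i, ∀ t : ℝ, 0 ≤ t → 0 < ∏ j, (u j t) ^ (a i j)) := by
  rintro ⟨u, hC2, hpos, hode, hprod⟩
  have hC2' i : ContDiffOn ℝ 2 (u i) (Ioi 0) := (hC2 i).mono Ioi_subset_Ici_self
  have hcont i : ContinuousOn (u i) (Ici 0) := (hC2 i).continuousOn
  have hdiff i : DifferentiableOn ℝ (u i) (Ioi 0) := (hC2' i).differentiableOn two_ne_zero
  have hanti i : AntitoneOn (deriv (u i)) (Ioi 0) :=
    antitoneOn_deriv_of_deriv_deriv_nonpos (hC2' i) fun t ht => by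
      rw [hode i t ht, neg_nonpos]
      exact (hprod i t ht.le).le
  have hbdd i : BddBelow (u i '' Ici 0) :=
    ⟨0, by rintro _ ⟨t, ht, rfl⟩; exact (hpos i t ht).le⟩
  have hderiv_nonneg i {t : ℝ} (ht : 0 < t) : 0 ≤ deriv (u i) t :=
    deriv_nonneg_of_antitoneOn_deriv_of_bddBelow (hcont i) (hdiff i) (hanti i) (hbdd i) ht
  have hmono i : MonotoneOn (u i) (Ici 0) :=
    monotoneOn_of_antitoneOn_deriv_of_bddBelow (hcont i) (hdiff i) (hanti i) (hbdd i)
  let i₀ : Fin m := ⟨0, hm⟩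
  have hprod_ge {t : ℝ} (ht : 1 ≤ t) : ∏ j, u j 1 ^ a i₀ j ≤ ∏ j, u j t ^ a i₀ j := by
    refine Finset.prod_le_prod (fun j _ => (rpow_pos_of_pos (hpos j 1 zero_le_one) _).le)
      fun j _ => rpow_le_rpow (hpos j 1 zero_le_one).le ?_ (ha i₀ j)
    exact hmono j (mem_Ici.2 zero_le_one) (mem_Ici.2 (zero_le_one.trans ht)) ht
  have hdiff' := (hC2' i₀).differentiableOn_deriv_Ioi
  refine not_bddBelow_image_Ici_of_deriv_le_neg (hprod i₀ 1 zero_le_one)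
    (hdiff'.continuousOn.mono (Ici_subset_Ioi.2 zero_lt_one))
    (hdiff'.mono (Ioi_subset_Ioi zero_le_one)) (fun t ht => ?_) ⟨0, ?_⟩
  · rw [hode i₀ t (zero_lt_one.trans ht), neg_le_neg_iff]
    exact hprod_ge (le_of_lt ht)
  · rintro _ ⟨t, ht, rfl⟩
    exact hderiv_nonneg i₀ (zero_lt_one.trans_le ht)
end
end

section
/- Let N ≥ 1, b > 0, and let f ∈ C¹(ℝ^N). Suppose that for every x ∈ ℝ^N there exists λ(x) > 0 such that (λ(x)/|y − x|)^b · f(x + λ(x)²(y − x)/|y − x|²) = f(y) for all y ∈ ℝ^N \ {x}. Then there exist a ≥ 0, d > 0, x̄ ∈ ℝ^N and a sign ε ∈ {+1, −1} such that f(x) = ε (a/(d + |x̄ − x|²))^{b/2} for all x ∈ ℝ^N. -/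
open Real Filter
open scoped BigOperators RealInnerProductSpace

noncomputable section

/-!
Put `y = θ / s`. Kelvin invariance about a centre `x` rewrites `s ↦ s⁻ᵇ f(θ / s)`, for small
`s > 0`, as a function that is differentiable at `s = 0`. Comparing the value and
the first derivative at `s = 0` obtained from the centres `x` and `0` shows that
`λ(x)ᵇ f(x) = A` is constant and that `b A ⟪x, ·⟫ + λ(x)ᵇ⁺² Df(x)` does not depend on `x`. When
`A > 0` this says that `λ² = (A / f)^(2/b)` has gradient `2x - v` for a fixed `v`, so
`λ(x)² = d + ‖x̄ - x‖²` and `f = A λ⁻ᵇ`; the case `A < 0` follows by applying this to `-f`, and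
`A = 0` forces `f = 0`.
-/

open scoped Topology

theorem HasDerivAt.eq_and_eq_of_eventuallyEq_nhdsGT {f g : ℝ → ℝ} {f' g' a : ℝ}
    (hf : HasDerivAt f f' a) (hg : HasDerivAt g g' a) (hfg : f =ᶠ[𝓝[>] a] g) :
    f a = g a ∧ f' = g' := by
  have hval : f a = g a :=
    tendsto_nhds_unique (hf.continuousAt.tendsto.mono_left nhdsWithin_le_nhds)
      ((hg.continuousAt.tendsto.mono_left nhdsWithin_le_nhds).congr' hfg.symm)
  exact ⟨hval, (uniqueDiffWithinAt_Ioi a).eq_deriv _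
    (hf.hasDerivWithinAt.congr_of_eventuallyEq hfg.symm hval.symm) hg.hasDerivWithinAt⟩

variable {F : Type*} [NormedAddCommGroup F] [InnerProductSpace ℝ F]

def KelvinInvariant (b : ℝ) (f : F → ℝ) (x : F) (lam : ℝ) : Prop :=
  ∀ y, y ≠ x → (lam / ‖y - x‖) ^ b * f (x + (lam ^ 2 / ‖y - x‖ ^ 2) • (y - x)) = f y

theorem KelvinInvariant.neg {b : ℝ} {f : F → ℝ} {x : F} {lam : ℝ}
    (h : KelvinInvariant b f x lam) : KelvinInvariant b (-f) x lam := fun y hy => by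
  simp only [Pi.neg_apply, mul_neg, h y hy]

def kelvinChart (b : ℝ) (f : F → ℝ) (x : F) (lam : ℝ) (θ : F) (s : ℝ) : ℝ :=
  lam ^ b * ((‖θ - s • x‖ ^ 2) ^ (-(b / 2)) *
    f (x + (lam ^ 2 * s / ‖θ - s • x‖ ^ 2) • (θ - s • x)))

variable {b : ℝ} {f : F → ℝ} {x : F} {lam : ℝ} {θ : F}

theorem kelvinChart_zero :
    kelvinChart b f x lam θ 0 = lam ^ b * ((‖θ‖ ^ 2) ^ (-(b / 2)) * f x) := by
  simp [kelvinChart]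

theorem KelvinInvariant.kelvinChart_eventuallyEq (h : KelvinInvariant b f x lam) (hlam : 0 ≤ lam)
    (hθ : θ ≠ 0) : kelvinChart b f x lam θ =ᶠ[𝓝[>] 0] fun s => s⁻¹ ^ b * f (s⁻¹ • θ) := by
  have hsmall : ∀ᶠ s in 𝓝[>] (0 : ℝ), s * ‖x‖ < ‖θ‖ := by
    refine nhdsWithin_le_nhds ((continuous_id.mul continuous_const).continuousAt.eventually_lt
      continuousAt_const ?_)
    simpa using hθ
  filter_upwards [hsmall, self_mem_nhdsWithin] with s hs (hs0 : 0 < s)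
  have hv : 0 < ‖θ - s • x‖ := by
    have := norm_sub_norm_le θ (s • x)
    rw [norm_smul, Real.norm_of_nonneg hs0.le] at this
    linarith
  have hyx : s⁻¹ • θ - x = s⁻¹ • (θ - s • x) := by
    rw [smul_sub, smul_smul, inv_mul_cancel₀ hs0.ne', one_smul]
  have hnorm : ‖s⁻¹ • θ - x‖ = s⁻¹ * ‖θ - s • x‖ := by
    rw [hyx, norm_smul, Real.norm_of_nonneg (inv_nonneg.mpr hs0.le)]
  have hne : s⁻¹ • θ ≠ x := by
    rw [← sub_ne_zero, ← norm_pos_iff, hnorm]; positivity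
  rw [← h _ hne, ← mul_assoc, ← mul_rpow (by positivity) (by positivity), hnorm, hyx, smul_smul,
    kelvinChart, ← mul_assoc]
  have hpre : s⁻¹ * (lam / (s⁻¹ * ‖θ - s • x‖)) = lam / ‖θ - s • x‖ := by field_simp
  congr 2
  · rw [hpre, div_rpow hlam hv.le, ← rpow_natCast, ← rpow_mul hv.le,
      show ((2 : ℕ) : ℝ) * -(b / 2) = -b by push_cast; ring, rpow_neg hv.le, div_eq_mul_inv]
  · field_simp

theorem hasDerivAt_kelvinChart (hf : DifferentiableAt ℝ f x) (hθ : θ ≠ 0) :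
    HasDerivAt (kelvinChart b f x lam θ) (lam ^ b * (‖θ‖ ^ 2) ^ (-(b / 2) - 1) *
      (b * ⟪x, θ⟫ * f x + lam ^ 2 * fderiv ℝ f x θ)) 0 := by
  have hq : (‖θ‖ ^ 2 : ℝ) ≠ 0 := by positivity
  have hv : HasDerivAt (fun s : ℝ => θ - s • x) (-x) 0 := by
    simpa using ((hasDerivAt_id (0 : ℝ)).smul_const x).const_sub θ
  have hQ : HasDerivAt (fun s : ℝ => ‖θ - s • x‖ ^ 2) (-(2 * ⟪x, θ⟫)) 0 := by
    simpa [real_inner_comm] using hv.norm_sq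
  have hcoef : HasDerivAt (fun s : ℝ => lam ^ 2 * s / ‖θ - s • x‖ ^ 2) (lam ^ 2 / ‖θ‖ ^ 2) 0 := by
    refine (((hasDerivAt_id (0 : ℝ)).const_mul (lam ^ 2)).div hQ (by simpa using hq)).congr_deriv ?_
    simp only [mul_one, zero_smul, sub_zero, id_eq, mul_zero, mul_neg, zero_mul, neg_zero]
    field_simp
  have hpt : HasDerivAt (fun s : ℝ => x + (lam ^ 2 * s / ‖θ - s • x‖ ^ 2) • (θ - s • x))
      ((lam ^ 2 / ‖θ‖ ^ 2) • θ) 0 := by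
    simpa using (hcoef.smul hv).const_add x
  have hfpt := hf.hasFDerivAt.comp_hasDerivAt_of_eq 0 hpt (by simp)
  have hpow := hQ.rpow_const (p := -(b / 2)) (Or.inl (by simpa using hq))
  refine ((hpow.mul hfpt).const_mul (lam ^ b)).congr_deriv ?_
  simp only [map_smul, smul_eq_mul, zero_smul, sub_zero, mul_zero, zero_div, add_zero,
    Function.comp_apply]
  rw [rpow_sub_one hq]
  field_simp

theorem KelvinInvariant.kelvinChart_eventuallyEq_kelvinChart {x' : F} {lam' : ℝ}
    (h : KelvinInvariant b f x lam) (h' : KelvinInvariant b f x' lam') (hlam : 0 ≤ lam)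
    (hlam' : 0 ≤ lam') (hθ : θ ≠ 0) :
    kelvinChart b f x lam θ =ᶠ[𝓝[>] 0] kelvinChart b f x' lam' θ :=
  (h.kelvinChart_eventuallyEq hlam hθ).trans (h'.kelvinChart_eventuallyEq hlam' hθ).symm

theorem KelvinInvariant.rpow_mul_eq [Nontrivial F] {x' : F} {lam' : ℝ}
    (h : KelvinInvariant b f x lam) (h' : KelvinInvariant b f x' lam') (hlam : 0 ≤ lam)
    (hlam' : 0 ≤ lam') (hf : DifferentiableAt ℝ f x) (hf' : DifferentiableAt ℝ f x') :
    lam ^ b * f x = lam' ^ b * f x' := by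
  obtain ⟨θ, hθ⟩ := exists_ne (0 : F)
  have := ((hasDerivAt_kelvinChart (b := b) (lam := lam) hf hθ).eq_and_eq_of_eventuallyEq_nhdsGT
    (hasDerivAt_kelvinChart (lam := lam') hf' hθ)
    (h.kelvinChart_eventuallyEq_kelvinChart h' hlam hlam' hθ)).1
  rw [kelvinChart_zero, kelvinChart_zero] at this
  refine mul_left_cancel₀ (by positivity : (‖θ‖ ^ 2) ^ (-(b / 2)) ≠ 0) ?_
  linear_combination this

theorem KelvinInvariant.rpow_mul_fderiv_eq {x' : F} {lam' : ℝ}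
    (h : KelvinInvariant b f x lam) (h' : KelvinInvariant b f x' lam') (hlam : 0 ≤ lam)
    (hlam' : 0 ≤ lam') (hf : DifferentiableAt ℝ f x) (hf' : DifferentiableAt ℝ f x') (θ : F) :
    lam ^ b * (b * ⟪x, θ⟫ * f x + lam ^ 2 * fderiv ℝ f x θ) =
      lam' ^ b * (b * ⟪x', θ⟫ * f x' + lam' ^ 2 * fderiv ℝ f x' θ) := by
  rcases eq_or_ne θ 0 with rfl | hθ
  · simp
  have := ((hasDerivAt_kelvinChart (b := b) (lam := lam) hf hθ).eq_and_eq_of_eventuallyEq_nhdsGT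
    (hasDerivAt_kelvinChart (lam := lam') hf' hθ)
    (h.kelvinChart_eventuallyEq_kelvinChart h' hlam hlam' hθ)).2
  refine mul_left_cancel₀ (by positivity : (‖θ‖ ^ 2) ^ (-(b / 2) - 1) ≠ 0) ?_
  linear_combination this

theorem exists_eq_add_norm_sub_sq_of_hasFDerivAt [CompleteSpace F] {g : F → ℝ} {L : F →L[ℝ] ℝ}
    (hg : ∀ x, HasFDerivAt g (2 • innerSL ℝ x - L) x) :
    ∃ xb : F, ∀ x, g x = g xb + ‖xb - x‖ ^ 2 := by
  have hd : ∀ z, HasFDerivAt (fun z => g z - ‖z‖ ^ 2 + L z) (0 : F →L[ℝ] ℝ) z := fun z =>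
    (((hg z).sub (hasStrictFDerivAt_norm_sq z).hasFDerivAt).add L.hasFDerivAt).congr_fderiv
      (by simp)
  have hconst : ∀ x, g x - ‖x‖ ^ 2 + L x = g 0 - ‖(0 : F)‖ ^ 2 + L 0 := fun x =>
    is_const_of_fderiv_eq_zero (fun z => (hd z).differentiableAt) (fun z => (hd z).fderiv) x 0
  set xb := (1 / 2 : ℝ) • (InnerProductSpace.toDual ℝ F).symm L
  have hxb : ∀ z, L z = 2 * ⟪xb, z⟫ := fun z => by
    rw [real_inner_smul_left, InnerProductSpace.toDual_symm_apply]; ring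
  refine ⟨xb, fun x => ?_⟩
  have h1 := hconst x
  have h2 := hconst xb
  rw [hxb, real_inner_self_eq_norm_sq] at h2
  rw [hxb] at h1
  simp only [norm_zero, map_zero] at h1 h2
  rw [norm_sub_sq_real]
  linarith

theorem hasFDerivAt_div_rpow_of_rpow_mul_eq (hb : b ≠ 0) (hf : Differentiable ℝ f)
    {lam : F → ℝ} (hlam : ∀ x, 0 < lam x) {A : ℝ} (hA : A ≠ 0)
    (hconst : ∀ x, lam x ^ b * f x = A) {L : F →L[ℝ] ℝ}
    (hrel : ∀ x θ, lam x ^ b * (b * ⟪x, θ⟫ * f x + lam x ^ 2 * fderiv ℝ f x θ) = L θ) (x : F) :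
    HasFDerivAt (fun z => (A / f z) ^ (2 / b)) (2 • innerSL ℝ x - (2 / (b * A)) • L) x := by
  have hμ : 0 < lam x ^ b := rpow_pos_of_pos (hlam x) b
  have hfx : f x = A / lam x ^ b := eq_div_of_mul_eq hμ.ne' (by rw [mul_comm, hconst x])
  have hfx0 : f x ≠ 0 := by rw [hfx]; exact div_ne_zero hA hμ.ne'
  have hAfx : A / f x = lam x ^ b := by rw [hfx, div_div_cancel₀ hA]
  have hφ : HasDerivAt (fun t => (A / t) ^ (2 / b)) (-(2 / b) * lam x ^ 2 * lam x ^ b / A)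
      (f x) := by
    refine (((hasDerivAt_const (f x) A).div (hasDerivAt_id (f x)) hfx0).rpow_const
      (p := 2 / b) (Or.inl (div_ne_zero hA hfx0))).congr_deriv ?_
    simp only [Pi.div_apply, id, zero_mul, zero_sub, mul_one]
    rw [rpow_sub_one (div_ne_zero hA hfx0), hAfx, ← rpow_mul (hlam x).le, mul_div_cancel₀ _ hb,
      hfx]
    norm_cast
    field_simp
  refine (hφ.comp_hasFDerivAt x (hf x).hasFDerivAt).congr_fderiv
    (ContinuousLinearMap.ext fun θ => ?_)
  simp only [neg_mul, smul_apply, smul_eq_mul, sub_apply, coe_innerSL_apply, nsmul_eq_mul,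
    Nat.cast_ofNat]
  field_simp
  linear_combination -hrel x θ + b * ⟪x, θ⟫ * hconst x

theorem exists_eq_rpow_of_kelvinInvariant_of_pos [CompleteSpace F] [Nontrivial F] (hb : b ≠ 0)
    (hf : Differentiable ℝ f) {lam : F → ℝ} (hlam : ∀ x, 0 < lam x)
    (hK : ∀ x, KelvinInvariant b f x (lam x)) (hA : 0 < lam 0 ^ b * f 0) :
    ∃ a, 0 ≤ a ∧ ∃ d, 0 < d ∧ ∃ xb : F, ∀ x, f x = (a / (d + ‖xb - x‖ ^ 2)) ^ (b / 2) := by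
  set A := lam 0 ^ b * f 0
  have hconst : ∀ x, lam x ^ b * f x = A := fun x =>
    (hK x).rpow_mul_eq (hK 0) (hlam x).le (hlam 0).le (hf x) (hf 0)
  have hfpos : ∀ x, 0 < f x := fun x =>
    pos_of_mul_pos_right (hconst x ▸ hA) (rpow_pos_of_pos (hlam x) b).le
  obtain ⟨xb, hxb⟩ := exists_eq_add_norm_sub_sq_of_hasFDerivAt
    (hasFDerivAt_div_rpow_of_rpow_mul_eq hb hf hlam hA.ne' hconst
      (L := (lam 0 ^ b * lam 0 ^ 2) • fderiv ℝ f 0) fun x θ =>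
        ((hK x).rpow_mul_fderiv_eq (hK 0) (hlam x).le (hlam 0).le (hf x) (hf 0) θ).trans
          (by simp only [inner_zero_left, smul_apply, smul_eq_mul]; ring))
  refine ⟨A ^ (2 / b), by positivity, (A / f xb) ^ (2 / b), by have := hfpos xb; positivity, xb,
    fun x => ?_⟩
  rw [← hxb x, ← div_rpow hA.le (div_pos hA (hfpos x)).le, div_div_cancel₀ hA.ne',
    ← rpow_mul (hfpos x).le, div_mul_div_comm, mul_comm 2 b, div_self (by simpa using hb),
    rpow_one]

/-- the moving-spheres calculus lemma: if `f ∈ C¹(ℝ^N)` is, for every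
center `x`, invariant under some Kelvin inversion with exponent `b`, then
`f(x) = ±(a/(d + |x̄ - x|²))^{b/2}`. -/
theorem stmt7 (N : ℕ) (hN : 1 ≤ N) (b : ℝ) (hb : 0 < b) (f : E N → ℝ)
    (hf : ContDiff ℝ 1 f)
    (hinv : ∀ x : E N, ∃ lam : ℝ, 0 < lam ∧ ∀ y : E N, y ≠ x →
      (lam / ‖y - x‖) ^ b * f (x + (lam ^ 2 / ‖y - x‖ ^ 2) • (y - x)) = f y) :
    ∃ a : ℝ, 0 ≤ a ∧ ∃ d : ℝ, 0 < d ∧ ∃ xb : E N, ∃ ε : ℝ, (ε = 1 ∨ ε = -1) ∧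
      ∀ x : E N, f x = ε * (a / (d + ‖xb - x‖ ^ 2)) ^ (b / 2) := by
  have : NeZero N := ⟨by omega⟩
  choose lam hlam hK using hinv
  replace hK : ∀ x, KelvinInvariant b f x (lam x) := hK
  replace hf := hf.differentiable one_ne_zero
  rcases lt_trichotomy (lam 0 ^ b * f 0) 0 with hA | hA | hA
  · obtain ⟨a, ha, d, hd, xb, hfx⟩ := exists_eq_rpow_of_kelvinInvariant_of_pos hb.ne' hf.neg hlam
      (fun x => (hK x).neg) (by simpa using hA)
    exact ⟨a, ha, d, hd, xb, -1, Or.inr rfl, fun x => by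
      rw [neg_one_mul, ← hfx x, Pi.neg_apply, neg_neg]⟩
  · refine ⟨0, le_rfl, 1, one_pos, 0, 1, Or.inl rfl, fun x => ?_⟩
    have hfx := (hK x).rpow_mul_eq (hK 0) (hlam x).le (hlam 0).le (hf x) (hf 0)
    rw [hA, mul_eq_zero_iff_left (rpow_pos_of_pos (hlam x) b).ne'] at hfx
    rw [hfx, zero_div, zero_rpow (by positivity), mul_zero]
  · obtain ⟨a, ha, d, hd, xb, hfx⟩ := exists_eq_rpow_of_kelvinInvariant_of_pos hb.ne' hf hlam hK hA
    exact ⟨a, ha, d, hd, xb, 1, Or.inl rfl, fun x => by rw [one_mul, hfx x]⟩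
end
end
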